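/- arXiv:2401.16493 — 3 statements merged into one kernel-verified Lean document; each statement's English description precedes it below -/
import Mathlib

section
/- For all natural numbers n ≥ 1 and 2 ≤ k ≤ n+1, the numbers A_{n,k} := ((2k-1)/(2n+1)) * binomial(2n+1, n+1-k) satisfy the recurrence A_{n,k} = A_{n-1,k-1} + 2*A_{n-1,k} + A_{n-1,k+1}. -/
/-!
For `k ≥ 1` the entry `A n k` is the ballot-number difference `C(2n, n+k-1) - C(2n, n+k)`; this
holds also beyond the triangle, where both sides vanish. Since `(1 + x)^(2n) = (1 + x)^2 (1 + x)^(2n-2)`,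
every `C(2n, r)` is the `(1, 2, 1)`-weighted sum of three consecutive entries of row `2n - 2`, and the
recurrence follows by taking differences.
-/

noncomputable def catalanTriangleA (n k : ℕ) : ℚ :=
  if 1 ≤ k ∧ k ≤ n + 1 then ((2 * k - 1 : ℚ)) / (2 * n + 1) * ((2 * n + 1).choose (n + 1 - k)) else 0

theorem Nat.choose_add_two_add_two (m r : ℕ) :
    (m + 2).choose (r + 2) = m.choose r + 2 * m.choose (r + 1) + m.choose (r + 2) := by
  rw [Nat.choose_succ_succ (m + 1), Nat.choose_succ_succ m, Nat.choose_succ_succ m (r + 1)]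
  ring

theorem Nat.succ_mul_choose_sub_choose_succ {R : Type*} [CommRing R] {m r : ℕ} (h : r ≤ m) :
    ((m + 1 : ℕ) : R) * (m.choose r - m.choose (r + 1)) =
      (m + 1).choose (r + 1) * (2 * r + 1 - m) := by
  have lower := congrArg (Nat.cast : ℕ → R) (Nat.add_one_mul_choose_eq m r)
  have upper := congrArg (Nat.cast : ℕ → R) (Nat.choose_mul_succ_eq m (r + 1))
  push_cast [Nat.cast_sub h] at lower upper ⊢
  linear_combination lower - upper

theorem catalanTriangleA_succ_eq_choose_sub_choose (n i : ℕ) :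
    catalanTriangleA n (i + 1) = (2 * n).choose (n + i) - (2 * n).choose (n + i + 1) := by
  unfold catalanTriangleA
  split_ifs with h
  · have symm : (2 * n + 1).choose (n + 1 - (i + 1)) = (2 * n + 1).choose (n + i + 1) :=
      Nat.choose_symm_of_eq_add (by omega)
    have key := Nat.succ_mul_choose_sub_choose_succ (R := ℚ) (m := 2 * n) (r := n + i) (by omega)
    rw [symm]
    push_cast at key ⊢
    field_simp
    linear_combination -key
  · rw [Nat.choose_eq_zero_of_lt (by omega), Nat.choose_eq_zero_of_lt (by omega)]
    simp

theorem catalanTriangleA_recurrence_general (n k : ℕ) (hn : 1 ≤ n) (hk : 2 ≤ k) :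
    catalanTriangleA n k =
      catalanTriangleA (n - 1) (k - 1) + 2 * catalanTriangleA (n - 1) k +
        catalanTriangleA (n - 1) (k + 1) := by
  obtain ⟨m, rfl⟩ : ∃ m, n = m + 1 := ⟨n - 1, by omega⟩
  obtain ⟨i, rfl⟩ : ∃ i, k = i + 2 := ⟨k - 2, by omega⟩
  simp only [Nat.add_sub_cancel, show i + 2 - 1 = i + 1 by omega,
    catalanTriangleA_succ_eq_choose_sub_choose]
  rw [show 2 * (m + 1) = 2 * m + 2 by ring, show m + 1 + (i + 1) = m + i + 2 by ring,
    show m + i + 2 + 1 = m + i + 1 + 2 by ring, Nat.choose_add_two_add_two,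
    Nat.choose_add_two_add_two]
  push_cast
  ring_nf

theorem catalanTriangleA_recurrence (n k : ℕ) (hn : 1 ≤ n) (hk : 2 ≤ k) (hkn : k ≤ n + 1) :
    catalanTriangleA n k =
      catalanTriangleA (n - 1) (k - 1) + 2 * catalanTriangleA (n - 1) k +
        catalanTriangleA (n - 1) (k + 1) :=
  catalanTriangleA_recurrence_general n k hn hk
end

section
/- For every integer q ≥ 1 and |z| < 1/4, the q-th power of the Catalan generating function satisfies C(z)^q = Σ_{n≥0} (q/(n+q)) * binomial(2n-1+q, n) * z^n. -/
noncomputable def catalanGF (z : ℂ) : ℂ := ∑' n : ℕ, (catalan n : ℂ) * z ^ n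

/-!
Multiplying `C = 1 + X C²` by `C^q` gives `C^(q+1) = C^q + X C^(q+2)`, i.e. the coefficients of
the powers of `C` satisfy a Pascal-type recurrence in `(q, n)`; the ballot numbers
`q / (n + q) * (2n+q-1 choose n)` satisfy the same recurrence with the same boundary values, which
identifies them as the coefficients of `C^q`. Since `catalan n ≤ 4 ^ n`, the series of `C` converges
absolutely on `‖z‖ < 1/4`, so the Cauchy product turns formal powers into powers of the sum.
-/

open PowerSeries Finset

theorem PowerSeries.coeff_mul_mul_pow {R : Type*} [CommSemiring R] (f g : R⟦X⟧) (z : R) (n : ℕ) :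
    coeff n (f * g) * z ^ n =
      ∑ kl ∈ antidiagonal n, (coeff kl.1 f * z ^ kl.1) * (coeff kl.2 g * z ^ kl.2) := by
  rw [coeff_mul, sum_mul]
  refine sum_congr rfl fun kl hkl => ?_
  rw [← mem_antidiagonal.mp hkl, pow_add]
  ring

section CauchyProduct

variable {R : Type*} [NormedCommRing R] {f g : R⟦X⟧} {z : R}

theorem PowerSeries.summable_norm_coeff_mul_mul_pow
    (hf : Summable fun n => ‖coeff n f * z ^ n‖) (hg : Summable fun n => ‖coeff n g * z ^ n‖) :
    Summable fun n => ‖coeff n (f * g) * z ^ n‖ := by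
  simpa only [coeff_mul_mul_pow] using summable_norm_sum_mul_antidiagonal_of_summable_norm hf hg

theorem PowerSeries.tsum_coeff_mul_mul_pow [CompleteSpace R]
    (hf : Summable fun n => ‖coeff n f * z ^ n‖) (hg : Summable fun n => ‖coeff n g * z ^ n‖) :
    ∑' n, coeff n (f * g) * z ^ n = (∑' n, coeff n f * z ^ n) * ∑' n, coeff n g * z ^ n := by
  simp only [tsum_mul_tsum_eq_tsum_sum_antidiagonal_of_summable_norm hf hg, coeff_mul_mul_pow]

theorem PowerSeries.summable_norm_coeff_pow_mul_pow
    (hf : Summable fun n => ‖coeff n f * z ^ n‖) (q : ℕ) :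
    Summable fun n => ‖coeff n (f ^ q) * z ^ n‖ := by
  induction q with
  | zero =>
    refine summable_of_ne_finset_zero (s := {0}) fun n hn => ?_
    simp [coeff_one, mem_singleton.not.mp hn]
  | succ q ih => simpa only [pow_succ] using summable_norm_coeff_mul_mul_pow ih hf

theorem PowerSeries.tsum_coeff_pow_mul_pow [CompleteSpace R]
    (hf : Summable fun n => ‖coeff n f * z ^ n‖) (q : ℕ) :
    ∑' n, coeff n (f ^ q) * z ^ n = (∑' n, coeff n f * z ^ n) ^ q := by
  induction q with
  | zero =>
    rw [pow_zero, tsum_eq_single 0 fun n hn => by simp [coeff_one, hn]]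
    simp
  | succ q ih =>
    rw [pow_succ, tsum_coeff_mul_mul_pow (summable_norm_coeff_pow_mul_pow hf q) hf, ih, pow_succ]

end CauchyProduct

noncomputable def ballot (K : Type*) [Field K] (q n : ℕ) : K :=
  q / (n + q) * (2 * n + q - 1).choose n

theorem ballot_add_ballot {K : Type*} [Field K] [CharZero K] (q n : ℕ) :
    ballot K q (n + 1) + ballot K (q + 2) n = ballot K (q + 1) (n + 1) := by
  have hA : 2 * (n + 1) + q - 1 = 2 * n + q + 1 := by omega
  have hB : 2 * n + (q + 2) - 1 = 2 * n + q + 1 := by omega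
  have hC : 2 * (n + 1) + (q + 1) - 1 = 2 * n + q + 1 + 1 := by omega
  have hratio : ((2 * n + q + 1).choose (n + 1) : K) * (n + 1) =
      (2 * n + q + 1).choose n * (n + q + 1) := by
    exact_mod_cast (Nat.choose_succ_right_eq _ _).trans (by congr 1; omega)
  simp only [ballot, hA, hB, hC]
  rw [Nat.choose_succ_succ (2 * n + q + 1)]
  push_cast
  have h1 : (n : K) + 1 + q ≠ 0 := by norm_cast; omega
  have h2 : (n : K) + (q + 2) ≠ 0 := by norm_cast
  have h3 : (n : K) + 1 + (q + 1) ≠ 0 := by norm_cast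
  field_simp
  linear_combination (-(n + q + 2 : K)) * hratio

namespace PowerSeries

theorem catalanSeries_pow_succ (q : ℕ) :
    catalanSeries ^ (q + 1) = catalanSeries ^ q + X * catalanSeries ^ (q + 2) :=
  calc catalanSeries ^ (q + 1) = catalanSeries ^ q * (catalanSeries ^ 2 * X + 1) := by
        rw [pow_succ, catalanSeries_sq_mul_X_add_one]
    _ = catalanSeries ^ q + X * catalanSeries ^ (q + 2) := by ring

theorem coeff_succ_catalanSeries_pow_succ (n q : ℕ) :
    coeff (n + 1) (catalanSeries ^ (q + 1)) =
      coeff (n + 1) (catalanSeries ^ q) + coeff n (catalanSeries ^ (q + 2)) := by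
  rw [catalanSeries_pow_succ, map_add, coeff_succ_X_mul]

-- `ballot K 0 0 = 0` (as `0 / 0 = 0`) while `coeff 0 (catalanSeries ^ 0) = 1`, hence `q ≠ 0`.
theorem coeff_catalanSeries_pow {K : Type*} [Field K] [CharZero K] {q : ℕ} (hq : q ≠ 0) (n : ℕ) :
    ((coeff n (catalanSeries ^ q) : ℕ) : K) = ballot K q n := by
  induction n generalizing q with
  | zero => simp [ballot, hq]
  | succ n ih =>
    clear hq
    induction q with
    | zero => simp [ballot]
    | succ q ihq =>
      rw [coeff_succ_catalanSeries_pow_succ, Nat.cast_add, ihq, ih (by omega), ballot_add_ballot]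

end PowerSeries

theorem catalan_le_four_pow (n : ℕ) : catalan n ≤ 4 ^ n :=
  calc catalan n ≤ (n + 1) * catalan n := Nat.le_mul_of_pos_left _ n.succ_pos
    _ = n.centralBinom := succ_mul_catalan_eq_centralBinom n
    _ ≤ 4 ^ n := Nat.centralBinom_le_four_pow n

theorem summable_norm_catalan_mul_pow {z : ℂ} (hz : ‖z‖ < 1 / 4) :
    Summable fun n => ‖(catalan n : ℂ) * z ^ n‖ := by
  refine .of_nonneg_of_le (fun _ => norm_nonneg _) (fun n => ?_)
    (summable_geometric_of_lt_one (by positivity) (by linarith : 4 * ‖z‖ < 1))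
  rw [norm_mul, norm_pow, Complex.norm_natCast, mul_pow]
  gcongr
  exact_mod_cast catalan_le_four_pow n

theorem catalanGF_pow (q : ℕ) (hq : 1 ≤ q) (z : ℂ) (hz : ‖z‖ < 1 / 4) :
    catalanGF z ^ q =
      ∑' n : ℕ, ((q : ℂ) / (n + q)) * ((2 * n + q - 1).choose n : ℂ) * z ^ n := by
  set C := catalanSeries.map (Nat.castRingHom ℂ)
  have hC : Summable fun n => ‖coeff n C * z ^ n‖ := by
    simpa [C] using summable_norm_catalan_mul_pow hz
  have hgf : catalanGF z = ∑' n, coeff n C * z ^ n := by simp [catalanGF, C]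
  rw [hgf, ← tsum_coeff_pow_mul_pow hC, ← map_pow]
  refine tsum_congr fun n => ?_
  rw [coeff_map, Nat.coe_castRingHom, coeff_catalanSeries_pow (by omega), ballot]
end

section
/- For every k ≥ 1 and |z| < 1/4, Σ_{n=k}^∞ B_{n,k} z^n = z^k C(z)^{2k} = (C(z) - 1)^k, where B_{n,k} = (k/n) binomial(2n, n-k). -/
noncomputable def catalanTriangleB (n k : ℕ) : ℂ :=
  (k : ℂ) / n * ((2 * n).choose (n - k))

/-- The coefficient of `z ^ n` in `C(z) ^ (b + 1)` (note the shift in `b`). -/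
def catalanPowCoeff (b n : ℕ) : ℤ :=
  (2 * n + b).choose n - (2 * n + b).choose (n + b + 1)

@[simp]
lemma catalanPowCoeff_zero_right (b : ℕ) : catalanPowCoeff b 0 = 1 := by
  simp [catalanPowCoeff]

lemma catalanPowCoeff_zero_succ (m : ℕ) : catalanPowCoeff 0 (m + 1) = catalanPowCoeff 1 m := by
  have h₁ := Nat.choose_succ_succ' (2 * m + 1) m
  have h₂ := Nat.choose_succ_succ' (2 * m + 1) (m + 1)
  zify at h₁ h₂
  simp only [catalanPowCoeff]
  ring_nf at h₁ h₂ ⊢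
  linear_combination h₁ - h₂

lemma catalanPowCoeff_succ_succ (b m : ℕ) :
    catalanPowCoeff (b + 1) (m + 1) = catalanPowCoeff b (m + 1) + catalanPowCoeff (b + 2) m := by
  have h₁ := Nat.choose_succ_succ' (2 * m + b + 2) m
  have h₂ := Nat.choose_succ_succ' (2 * m + b + 2) (m + b + 2)
  zify at h₁ h₂
  simp only [catalanPowCoeff]
  ring_nf at h₁ h₂ ⊢
  linear_combination h₁ - h₂

lemma catalanPowCoeff_zero_eq_catalan (n : ℕ) : catalanPowCoeff 0 n = catalan n := by
  have hcentral : ((n + 1) * catalan n : ℕ) = (2 * n).choose n := succ_mul_catalan_eq_centralBinom n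
  have hshift := Nat.choose_succ_right_eq (2 * n) n
  rw [show 2 * n - n = n by omega] at hshift
  refine mul_left_cancel₀ (b := catalanPowCoeff 0 n) (by positivity : (n + 1 : ℤ) ≠ 0) ?_
  rw [catalanPowCoeff, add_zero]
  zify at hcentral hshift ⊢
  linear_combination -hcentral - hshift

lemma add_one_mul_catalanPowCoeff (b n : ℕ) :
    (2 * n + b + 1) * catalanPowCoeff b n = (b + 1) * (2 * n + b + 1).choose n := by
  cases n with
  | zero => simp
  | succ m =>
    have hsymm : (2 * m + b + 2).choose (m + 1 + b + 1) = (2 * m + b + 2).choose m :=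
      Nat.choose_symm_of_eq_add (by ring)
    have hleft := Nat.choose_mul_succ_eq (2 * m + b + 2) (m + 1)
    have hright := Nat.add_one_mul_choose_eq (2 * m + b + 2) m
    rw [show 2 * m + b + 2 + 1 - (m + 1) = m + b + 2 by omega] at hleft
    rw [catalanPowCoeff, show 2 * (m + 1) + b = 2 * m + b + 2 by ring, hsymm]
    zify at hleft hright
    push_cast
    linear_combination hleft - hright

section analytic

variable {z : ℂ}

lemma summable_norm_choose_mul_pow (b : ℕ) (f : ℕ → ℕ) (hz : ‖z‖ < 1 / 4) :
    Summable fun n => ‖((2 * n + b).choose (f n) : ℂ) * z ^ n‖ := by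
  refine .of_nonneg_of_le (fun _ => norm_nonneg _) (fun n => ?_)
    ((summable_geometric_of_lt_one (by positivity) (by linarith : 4 * ‖z‖ < 1)).mul_left (2 ^ b))
  calc ‖((2 * n + b).choose (f n) : ℂ) * z ^ n‖ = (2 * n + b).choose (f n) * ‖z‖ ^ n := by
        rw [norm_mul, norm_pow, Complex.norm_natCast]
    _ ≤ 2 ^ (2 * n + b) * ‖z‖ ^ n := by gcongr; exact_mod_cast Nat.choose_le_two_pow _ _
    _ = 2 ^ b * (4 * ‖z‖) ^ n := by rw [pow_add, pow_mul, mul_pow]; norm_num; ring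

lemma summable_norm_catalanPowCoeff_mul_pow (b : ℕ) (hz : ‖z‖ < 1 / 4) :
    Summable fun n => ‖(catalanPowCoeff b n : ℂ) * z ^ n‖ := by
  refine .of_nonneg_of_le (fun _ => norm_nonneg _) (fun n => ?_)
    ((summable_norm_choose_mul_pow b (fun n => n) hz).add
      (summable_norm_choose_mul_pow b (fun n => n + b + 1) hz))
  rw [catalanPowCoeff, Int.cast_sub, Int.cast_natCast, Int.cast_natCast, sub_mul]
  exact norm_sub_le _ _

lemma catalanGF_eq_one_add_mul_sq (hz : ‖z‖ < 1 / 4) : catalanGF z = 1 + z * catalanGF z ^ 2 := by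
  have hsum : Summable fun n => ‖(catalan n : ℂ) * z ^ n‖ := by
    simpa [catalanPowCoeff_zero_eq_catalan] using summable_norm_catalanPowCoeff_mul_pow 0 hz
  have hsq : catalanGF z ^ 2 = ∑' n, (catalan (n + 1) : ℂ) * z ^ n := by
    rw [sq, catalanGF, tsum_mul_tsum_eq_tsum_sum_antidiagonal_of_summable_norm hsum hsum]
    refine tsum_congr fun n => ?_
    rw [catalan_succ', Nat.cast_sum, Finset.sum_mul]
    refine Finset.sum_congr rfl fun ij hij => ?_
    rw [← Finset.HasAntidiagonal.mem_antidiagonal.mp hij, pow_add]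
    push_cast
    ring
  rw [hsq, catalanGF, hsum.of_norm.tsum_eq_zero_add, ← tsum_mul_left]
  simp [pow_succ', mul_left_comm]

noncomputable def catalanPowGF (b : ℕ) (z : ℂ) : ℂ := ∑' n : ℕ, (catalanPowCoeff b n : ℂ) * z ^ n

lemma catalanPowGF_zero : catalanPowGF 0 z = catalanGF z := by
  simp [catalanPowGF, catalanGF, catalanPowCoeff_zero_eq_catalan]

lemma catalanPowGF_zero_eq_one_add_mul (hz : ‖z‖ < 1 / 4) :
    catalanPowGF 0 z = 1 + z * catalanPowGF 1 z := by
  rw [catalanPowGF, (summable_norm_catalanPowCoeff_mul_pow 0 hz).of_norm.tsum_eq_zero_add,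
    catalanPowGF, ← tsum_mul_left]
  simp [catalanPowCoeff_zero_succ, pow_succ', mul_left_comm]

lemma catalanPowGF_succ (b : ℕ) (hz : ‖z‖ < 1 / 4) :
    catalanPowGF (b + 1) z = catalanPowGF b z + z * catalanPowGF (b + 2) z := by
  have hsum (b : ℕ) := (summable_norm_catalanPowCoeff_mul_pow b hz).of_norm
  rw [catalanPowGF, (hsum _).tsum_eq_zero_add, catalanPowGF, (hsum _).tsum_eq_zero_add,
    catalanPowGF, ← tsum_mul_left, add_assoc,
    ← ((summable_nat_add_iff 1).mpr (hsum b)).tsum_add ((hsum _).mul_left z)]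
  simp [catalanPowCoeff_succ_succ, pow_succ', add_mul, mul_add, mul_left_comm]

lemma catalanPowGF_eq_pow (hz : ‖z‖ < 1 / 4) (b : ℕ) :
    catalanPowGF b z = catalanGF z ^ (b + 1) := by
  rcases eq_or_ne z 0 with rfl | hz0
  · simp [catalanPowGF, catalanGF, zero_pow_eq]
  induction b using Nat.twoStepInduction with
  | zero => rw [catalanPowGF_zero, zero_add, pow_one]
  | one =>
    refine mul_left_cancel₀ hz0 ?_
    rw [← add_right_inj 1, ← catalanPowGF_zero_eq_one_add_mul hz, catalanPowGF_zero,
      ← catalanGF_eq_one_add_mul_sq hz]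
  | more b ih0 ih1 =>
    refine mul_left_cancel₀ hz0 ?_
    rw [← add_right_inj (catalanPowGF b z), ← catalanPowGF_succ b hz, ih0, ih1]
    linear_combination catalanGF z ^ (b + 1) * catalanGF_eq_one_add_mul_sq hz

end analytic

lemma catalanTriangleB_add_succ_eq_catalanPowCoeff (n j : ℕ) :
    catalanTriangleB (n + (j + 1)) (j + 1) = catalanPowCoeff (2 * j + 1) n := by
  have h := congrArg (Int.cast : ℤ → ℂ) (add_one_mul_catalanPowCoeff (2 * j + 1) n)
  push_cast at h
  rw [catalanTriangleB, Nat.add_sub_cancel,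
    show 2 * (n + (j + 1)) = 2 * n + (2 * j + 1) + 1 by ring, div_mul_eq_mul_div,
    div_eq_iff (Nat.cast_ne_zero.mpr (by omega))]
  -- otherwise `push_cast` also reassociates the index of the binomial
  generalize (2 * n + (2 * j + 1) + 1).choose n = N at h ⊢
  push_cast
  linear_combination -h / 2

theorem catalanTriangleB_column_gf (k : ℕ) (hk : 1 ≤ k) (z : ℂ)
    (hz : ‖z‖ < 1 / 4) :
    (∑' n : ℕ, catalanTriangleB (n + k) k * z ^ (n + k)) = z ^ k * catalanGF z ^ (2 * k) ∧
      z ^ k * catalanGF z ^ (2 * k) = (catalanGF z - 1) ^ k := by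
  obtain ⟨j, rfl⟩ : ∃ j, k = j + 1 := ⟨k - 1, by omega⟩
  constructor
  · simp_rw [catalanTriangleB_add_succ_eq_catalanPowCoeff, pow_add z _ (j + 1), ← mul_assoc]
    rw [tsum_mul_right, ← catalanPowGF.eq_1, catalanPowGF_eq_pow hz, mul_comm]
    ring
  · rw [sub_eq_of_eq_add' (catalanGF_eq_one_add_mul_sq hz), mul_pow, ← pow_mul, mul_comm 2]
end
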